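/- arXiv:0711.2762 — 2 statements merged into one kernel-verified Lean document; each statement's English description precedes it below -/
import Mathlib

section
/- For jointly distributed finite random variables W1, W2, S1^n, S2^n, Y^n with W1 uniform on a set of size M1, W1 independent of W2, and (W1, W2) independent of (S1^n, S2^n), and X_i^n a deterministic function of (W_i, S_i^n): n·R1 = H(W1) ≤ I(W1, S1^n; Y^n | W2, X2^n, S2^n) − H(S1^n | S2^n) + H(W1, S1^n | W2, S2^n, Y^n), where R1 = (1/n) log2 M1. -/
/-!
The inequality is in fact an equality. Since `X₂ⁿ` is a function of `(W₂, S₂ⁿ)`, conditioning on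
`(W₂, X₂ⁿ, S₂ⁿ)` is conditioning on `(W₂, S₂ⁿ)`, and the chain rule
`I(A; Yⁿ | Z) + H(A | Yⁿ, Z) = H(A | Z)` collapses the right-hand side to
`H(W₁, S₁ⁿ | W₂, S₂ⁿ) - H(S₁ⁿ | S₂ⁿ)`. Independence of `W₁`, `W₂` and `(S₁ⁿ, S₂ⁿ)` makes entropy
additive, which leaves `H(W₁) = log₂ M₁`.
-/


open scoped BigOperators

set_option synthInstance.maxSize 2048

namespace IE

variable {Ω : Type*} [Fintype Ω]

/-- Probability that the random variable `X` takes the value `x`, under pmf `p`. -/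
noncomputable def pr {α : Type*} [DecidableEq α] (p : Ω → ℝ) (X : Ω → α) (x : α) : ℝ :=
  ∑ ω : Ω, if X ω = x then p ω else 0

/-- Shannon entropy (base 2) of a random variable. -/
noncomputable def ent {α : Type*} [Fintype α] [DecidableEq α] (p : Ω → ℝ) (X : Ω → α) : ℝ :=
  -∑ x : α, pr p X x * Real.logb 2 (pr p X x)

/-- Conditional entropy H(X | Z). -/
noncomputable def cent {α β : Type*} [Fintype α] [DecidableEq α] [Fintype β] [DecidableEq β]
    (p : Ω → ℝ) (X : Ω → α) (Z : Ω → β) : ℝ :=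
  ent p (fun ω => (X ω, Z ω)) - ent p Z

/-- Mutual information I(X ; Y). -/
noncomputable def mi {α β : Type*} [Fintype α] [DecidableEq α] [Fintype β] [DecidableEq β]
    (p : Ω → ℝ) (X : Ω → α) (Y : Ω → β) : ℝ :=
  ent p X + ent p Y - ent p (fun ω => (X ω, Y ω))

/-- Conditional mutual information I(X ; Y | Z). -/
noncomputable def cmi {α β γ : Type*} [Fintype α] [DecidableEq α] [Fintype β] [DecidableEq β]
    [Fintype γ] [DecidableEq γ] (p : Ω → ℝ) (X : Ω → α) (Y : Ω → β) (Z : Ω → γ) : ℝ :=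
  ent p (fun ω => (X ω, Z ω)) + ent p (fun ω => (Y ω, Z ω))
    - ent p (fun ω => (X ω, Y ω, Z ω)) - ent p Z

/-- `p` is a probability mass function on `Ω`. -/
def IsPMF (p : Ω → ℝ) : Prop := (∀ ω, 0 ≤ p ω) ∧ ∑ ω : Ω, p ω = 1

-- In this form `H(X)` visibly depends only on the partition of `Ω` into the level sets of `X`.
lemma ent_eq_neg_sum_logb_pr {α : Type*} [Fintype α] [DecidableEq α] (p : Ω → ℝ) (X : Ω → α) :
    ent p X = -∑ ω, p ω * Real.logb 2 (pr p X (X ω)) := by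
  unfold ent
  congr 1
  simp only [pr, Finset.sum_mul, ite_mul, zero_mul]
  rw [Finset.sum_comm]
  exact Finset.sum_congr rfl fun ω _ => by rw [Finset.sum_ite_eq]; simp

lemma ent_congr_of_iff {α β : Type*} [Fintype α] [DecidableEq α] [Fintype β] [DecidableEq β]
    (p : Ω → ℝ) {X : Ω → α} {Y : Ω → β} (h : ∀ ω ω', X ω = X ω' ↔ Y ω = Y ω') :
    ent p X = ent p Y := by
  simp only [ent_eq_neg_sum_logb_pr, pr, h]

lemma le_pr_apply {α : Type*} [DecidableEq α] {p : Ω → ℝ} (hp : ∀ ω, 0 ≤ p ω) (X : Ω → α)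
    (ω : Ω) : p ω ≤ pr p X (X ω) := by
  unfold pr
  refine le_of_eq_of_le (if_pos rfl).symm
    (Finset.single_le_sum (f := fun ω' => if X ω' = X ω then p ω' else 0)
      (fun ω' _ => ?_) (Finset.mem_univ ω))
  split <;> simp [hp ω']

def IndepRV {α β : Type*} [DecidableEq α] [DecidableEq β] (p : Ω → ℝ) (X : Ω → α)
    (Y : Ω → β) : Prop :=
  ∀ a b, pr p (fun ω => (X ω, Y ω)) (a, b) = pr p X a * pr p Y b

lemma ent_pair_of_indep {α β : Type*} [Fintype α] [DecidableEq α] [Fintype β] [DecidableEq β]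
    {p : Ω → ℝ} (hp : ∀ ω, 0 ≤ p ω) {X : Ω → α} {Y : Ω → β} (h : IndepRV p X Y) :
    ent p (fun ω => (X ω, Y ω)) = ent p X + ent p Y := by
  simp only [ent_eq_neg_sum_logb_pr, h _ _, ← neg_add, ← Finset.sum_add_distrib, ← mul_add]
  congr 1
  refine Finset.sum_congr rfl fun ω _ => ?_
  rcases (hp ω).eq_or_lt with h0 | hpos
  · simp [← h0]
  rw [Real.logb_mul (hpos.trans_le (le_pr_apply hp X ω)).ne'
    (hpos.trans_le (le_pr_apply hp Y ω)).ne']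

lemma pr_comp {α β : Type*} [Fintype α] [DecidableEq α] [DecidableEq β] (p : Ω → ℝ)
    (X : Ω → α) (f : α → β) (b : β) :
    pr p (fun ω => f (X ω)) b = ∑ a with f a = b, pr p X a := by
  unfold pr
  rw [Finset.sum_comm]
  refine Finset.sum_congr rfl fun ω _ => ?_
  rw [Finset.sum_ite_eq]
  simp

lemma IndepRV.comp {α β α' β' : Type*} [Fintype α] [DecidableEq α] [Fintype β] [DecidableEq β]
    [DecidableEq α'] [DecidableEq β'] {p : Ω → ℝ} {X : Ω → α} {Y : Ω → β} (h : IndepRV p X Y)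
    (f : α → α') (g : β → β') : IndepRV p (fun ω => f (X ω)) (fun ω => g (Y ω)) := by
  intro a b
  rw [pr_comp p X f, pr_comp p Y g, Finset.sum_mul_sum, ← Finset.sum_product',
    ← Finset.filter_product, show (fun ω => (f (X ω), g (Y ω))) = fun ω => Prod.map f g (X ω, Y ω)
      from rfl, pr_comp]
  simp [h _ _, Prod.ext_iff]

lemma ent_eq_logb_card_of_uniform {α : Type*} [Fintype α] [DecidableEq α] (p : Ω → ℝ)
    (X : Ω → α) (h : ∀ a, pr p X a = 1 / Fintype.card α) :
    ent p X = Real.logb 2 (Fintype.card α) := by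
  rcases (Fintype.card α).eq_zero_or_pos with h0 | hpos
  · simp [ent, Fintype.card_eq_zero_iff.1 h0]
  simp only [ent, h, Finset.sum_const, Finset.card_univ, nsmul_eq_mul, one_div, Real.logb_inv]
  field_simp

lemma cmi_add_cent_eq_cent {α β γ : Type*} [Fintype α] [DecidableEq α] [Fintype β]
    [DecidableEq β] [Fintype γ] [DecidableEq γ] (p : Ω → ℝ) (X : Ω → α) (Y : Ω → β)
    (Z : Ω → γ) : cmi p X Y Z + cent p X (fun ω => (Y ω, Z ω)) = cent p X Z := by
  unfold cmi cent
  ring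

lemma cent_congr_right_of_iff {α β β' : Type*} [Fintype α] [DecidableEq α] [Fintype β]
    [DecidableEq β] [Fintype β'] [DecidableEq β'] (p : Ω → ℝ) (X : Ω → α) {Z : Ω → β}
    {Z' : Ω → β'} (h : ∀ ω ω', Z ω = Z ω' ↔ Z' ω = Z' ω') : cent p X Z = cent p X Z' := by
  unfold cent
  rw [ent_congr_of_iff p (X := fun ω => (X ω, Z ω)) (Y := fun ω => (X ω, Z' ω))
    (fun ω ω' => by simp [h]), ent_congr_of_iff p h]

lemma cmi_congr_right_of_iff {α β γ γ' : Type*} [Fintype α] [DecidableEq α] [Fintype β]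
    [DecidableEq β] [Fintype γ] [DecidableEq γ] [Fintype γ'] [DecidableEq γ'] (p : Ω → ℝ)
    (X : Ω → α) (Y : Ω → β) {Z : Ω → γ} {Z' : Ω → γ'} (h : ∀ ω ω', Z ω = Z ω' ↔ Z' ω = Z' ω') :
    cmi p X Y Z = cmi p X Y Z' := by
  have hZ := cmi_add_cent_eq_cent p X Y Z
  rw [cent_congr_right_of_iff p X h,
    cent_congr_right_of_iff p X (Z' := fun ω => (Y ω, Z' ω)) (fun ω ω' => by simp [h])] at hZ
  linarith [cmi_add_cent_eq_cent p X Y Z']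

theorem mac_converse_start_general
    {Ω 𝒲₂ σ₁ σ₂ χ₂ γ : Type*} [Fintype Ω]
    [Fintype 𝒲₂] [DecidableEq 𝒲₂] [Fintype σ₁] [DecidableEq σ₁]
    [Fintype σ₂] [DecidableEq σ₂]
    [Fintype χ₂] [DecidableEq χ₂] [Fintype γ] [DecidableEq γ]
    (p : Ω → ℝ) (hp : IsPMF p) (n M1 : ℕ) (hn : 0 < n)
    (W1 : Ω → Fin M1) (W2 : Ω → 𝒲₂)
    (S1n : Ω → σ₁) (S2n : Ω → σ₂) (X2n : Ω → χ₂) (Yn : Ω → γ)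
    (hunif : ∀ w, pr p W1 w = 1 / M1)
    (hW : ∀ a b, pr p (fun ω => (W1 ω, W2 ω)) (a, b) = pr p W1 a * pr p W2 b)
    (hWS : ∀ a b s1 s2,
      pr p (fun ω => (W1 ω, W2 ω, S1n ω, S2n ω)) (a, b, s1, s2)
        = pr p (fun ω => (W1 ω, W2 ω)) (a, b)
            * pr p (fun ω => (S1n ω, S2n ω)) (s1, s2))
    (hX2 : ∃ f2 : 𝒲₂ → σ₂ → χ₂, ∀ ω, X2n ω = f2 (W2 ω) (S2n ω)) :
    (n : ℝ) * (Real.logb 2 M1 / n) = ent p W1 ∧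
    ent p W1
      ≤ cmi p (fun ω => (W1 ω, S1n ω)) Yn (fun ω => (W2 ω, X2n ω, S2n ω))
          - cent p S1n S2n
          + cent p (fun ω => (W1 ω, S1n ω)) (fun ω => (W2 ω, S2n ω, Yn ω)) := by
  obtain ⟨f2, hf2⟩ := hX2
  have hH : ent p W1 = Real.logb 2 M1 := by
    simpa using ent_eq_logb_card_of_uniform p W1 (by simpa using hunif)
  refine ⟨by rw [hH]; field_simp, le_of_eq ?_⟩
  have hX2_det : cmi p (fun ω => (W1 ω, S1n ω)) Yn (fun ω => (W2 ω, X2n ω, S2n ω))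
      = cmi p (fun ω => (W1 ω, S1n ω)) Yn (fun ω => (W2 ω, S2n ω)) :=
    cmi_congr_right_of_iff p _ _ fun ω ω' => by simp [hf2]; grind
  have hY : cent p (fun ω => (W1 ω, S1n ω)) (fun ω => (W2 ω, S2n ω, Yn ω))
      = cent p (fun ω => (W1 ω, S1n ω)) (fun ω => (Yn ω, W2 ω, S2n ω)) :=
    cent_congr_right_of_iff p _ fun ω ω' => by simp; tauto
  have hindep : IndepRV p (fun ω => (W1 ω, W2 ω)) (fun ω => (S1n ω, S2n ω)) :=
    fun ⟨a, b⟩ ⟨s1, s2⟩ => by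
      rw [← hWS]
      simp only [pr, Prod.mk.injEq, and_assoc]
  have hWS_ent : ent p (fun ω => ((W1 ω, S1n ω), (W2 ω, S2n ω)))
      = ent p W1 + ent p W2 + ent p (fun ω => (S1n ω, S2n ω)) := by
    rw [ent_congr_of_iff p (Y := fun ω => ((W1 ω, W2 ω), (S1n ω, S2n ω))) (by simp; tauto),
      ent_pair_of_indep hp.1 hindep, ent_pair_of_indep hp.1 hW]
  have hW2S2_ent : ent p (fun ω => (W2 ω, S2n ω)) = ent p W2 + ent p S2n :=
    ent_pair_of_indep hp.1 (hindep.comp Prod.snd Prod.snd)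
  have hchain := cmi_add_cent_eq_cent p (fun ω => (W1 ω, S1n ω)) Yn (fun ω => (W2 ω, S2n ω))
  rw [hX2_det, hY]
  unfold cent at *
  linarith

/-- first step of the MAC converse:
n·R1 = H(W1) ≤ I(W1,S1^n;Y^n|W2,X2^n,S2^n) − H(S1^n|S2^n) + H(W1,S1^n|W2,S2^n,Y^n). -/
theorem mac_converse_start
    {Ω 𝒲₂ σ₁ σ₂ χ₁ χ₂ γ : Type*} [Fintype Ω]
    [Fintype 𝒲₂] [DecidableEq 𝒲₂] [Fintype σ₁] [DecidableEq σ₁]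
    [Fintype σ₂] [DecidableEq σ₂] [Fintype χ₁] [DecidableEq χ₁]
    [Fintype χ₂] [DecidableEq χ₂] [Fintype γ] [DecidableEq γ]
    (p : Ω → ℝ) (hp : IsPMF p) (n M1 : ℕ) (hn : 0 < n) (hM1 : 0 < M1)
    (W1 : Ω → Fin M1) (W2 : Ω → 𝒲₂)
    (S1n : Ω → σ₁) (S2n : Ω → σ₂) (X1n : Ω → χ₁) (X2n : Ω → χ₂) (Yn : Ω → γ)
    (hunif : ∀ w, pr p W1 w = 1 / M1)
    (hW : ∀ a b, pr p (fun ω => (W1 ω, W2 ω)) (a, b) = pr p W1 a * pr p W2 b)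
    (hWS : ∀ a b s1 s2,
      pr p (fun ω => (W1 ω, W2 ω, S1n ω, S2n ω)) (a, b, s1, s2)
        = pr p (fun ω => (W1 ω, W2 ω)) (a, b)
            * pr p (fun ω => (S1n ω, S2n ω)) (s1, s2))
    (hX1 : ∃ f1 : Fin M1 → σ₁ → χ₁, ∀ ω, X1n ω = f1 (W1 ω) (S1n ω))
    (hX2 : ∃ f2 : 𝒲₂ → σ₂ → χ₂, ∀ ω, X2n ω = f2 (W2 ω) (S2n ω)) :
    (n : ℝ) * (Real.logb 2 M1 / n) = ent p W1 ∧
    ent p W1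
      ≤ cmi p (fun ω => (W1 ω, S1n ω)) Yn (fun ω => (W2 ω, X2n ω, S2n ω))
          - cent p S1n S2n
          + cent p (fun ω => (W1 ω, S1n ω)) (fun ω => (W2 ω, S2n ω, Yn ω)) :=
  mac_converse_start_general p hp n M1 hn W1 W2 S1n S2n X2n Yn hunif hW hWS hX2

end IE
end

section
/- For finite random variables W2, S^n (i.i.d. S_j), Z^n with W2 independent of S^n and W2 uniform on M2 values: (1/n)·H(W2) ≤ (1/n)·Σ_{j=1}^n [ I(W2, Z^{j−1}, S_{j+1}^n ; Z_j) − I(W2, Z^{j−1}, S_{j+1}^n ; S_j) ] + ε_n, where n·ε_n = 1 + n·R2·P_e^n with P_e^n = P(ĝ(Z^n) ≠ W2) and R2 = (1/n)log2 M2. -/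
open scoped BigOperators

set_option synthInstance.maxSize 2048

namespace IE

variable {Ω : Type*} [Fintype Ω]

section basic
variable {α β : Type*} [DecidableEq α] [DecidableEq β] (p : Ω → ℝ)

lemma pr_nonneg (hp : IsPMF p) (X : Ω → α) (a : α) : 0 ≤ pr p X a := by
  apply Finset.sum_nonneg; intro ω _; split <;> simp [hp.1 ω]

lemma pr_le_pr (hp : IsPMF p) {X : Ω → α} {Y : Ω → β} {a : α} {b : β}
    (h : ∀ ω, X ω = a → Y ω = b) : pr p X a ≤ pr p Y b := by
  apply Finset.sum_le_sum; intro ω _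
  by_cases hX : X ω = a
  · simp [hX, h ω hX]
  · simp only [hX, if_false]; split <;> simp [hp.1 ω]

lemma sum_pr [Fintype α] (hp : IsPMF p) (X : Ω → α) : ∑ a : α, pr p X a = 1 := by
  unfold pr
  rw [Finset.sum_comm]
  rw [← hp.2]
  refine Finset.sum_congr rfl fun ω _ => ?_
  simp

lemma pr_marg_left [Fintype β] (X : Ω → α) (Y : Ω → β) (a : α) :
    ∑ b : β, pr p (fun ω => (X ω, Y ω)) (a, b) = pr p X a := by
  unfold pr
  rw [Finset.sum_comm]
  refine Finset.sum_congr rfl fun ω _ => ?_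
  by_cases h : X ω = a <;> simp [Prod.ext_iff, h]

lemma pr_marg_right [Fintype α] (X : Ω → α) (Y : Ω → β) (b : β) :
    ∑ a : α, pr p (fun ω => (X ω, Y ω)) (a, b) = pr p Y b := by
  unfold pr
  rw [Finset.sum_comm]
  refine Finset.sum_congr rfl fun ω _ => ?_
  by_cases h : Y ω = b <;> simp [Prod.ext_iff, h]

lemma pr_comp_eq [Fintype α] {X : Ω → α} {f : α → β} (hf : Function.Injective f) (a : α) :
    pr p (fun ω => f (X ω)) (f a) = pr p X a := by
  unfold pr
  refine Finset.sum_congr rfl fun ω _ => ?_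
  simp [hf.eq_iff]

lemma ent_comp [Fintype α] [Fintype β] (X : Ω → α) (f : α → β) (hf : Function.Injective f) :
    ent p (fun ω => f (X ω)) = ent p X := by
  unfold ent
  congr 1
  rw [← Finset.sum_subset (Finset.subset_univ (Finset.univ.image f))]
  · rw [Finset.sum_image (fun a _ b _ h => hf h)]
    refine Finset.sum_congr rfl fun a _ => ?_
    rw [pr_comp_eq p hf]
  · intro y _ hy
    have h0 : pr p (fun ω => f (X ω)) y = 0 := by
      unfold pr
      apply Finset.sum_eq_zero
      intro ω _
      have : f (X ω) ≠ y := fun h => hy (by simp [← h])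
      simp [this]
    simp [h0]

end basic
lemma point_bound {r s : ℝ} (hr : 0 ≤ r) (hs : 0 ≤ s) (hrs : 0 < r → 0 < s) :
    r * Real.logb 2 s - r * Real.logb 2 r ≤ (s - r) / Real.log 2 := by
  have hlog2 : (0:ℝ) < Real.log 2 := Real.log_pos (by norm_num)
  rcases eq_or_lt_of_le hr with h0 | hr
  · rw [← h0]
    simp
    positivity
  · have hs' := hrs hr
    have key : Real.log (s / r) ≤ s / r - 1 :=
      Real.log_le_sub_one_of_pos (by positivity)
    have : r * Real.log (s / r) ≤ s - r := by
      have := mul_le_mul_of_nonneg_left key hr.le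
      calc r * Real.log (s / r) ≤ r * (s / r - 1) := this
        _ = s - r := by field_simp
    calc r * Real.logb 2 s - r * Real.logb 2 r
        = r * Real.log (s / r) / Real.log 2 := by
          rw [Real.log_div (ne_of_gt hs') (ne_of_gt hr)]
          unfold Real.logb; ring
      _ ≤ (s - r) / Real.log 2 := by
          gcongr

section gibbs
variable {α β : Type*} [Fintype α] [DecidableEq α] [Fintype β] [DecidableEq β] (p : Ω → ℝ)

lemma sum_lift_left (hX : Ω → α) (hY : Ω → β) (f : α → ℝ) :
    ∑ ab : α × β, pr p (fun ω => (hX ω, hY ω)) ab * f ab.1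
      = ∑ a : α, pr p hX a * f a := by
  rw [Fintype.sum_prod_type]
  refine Finset.sum_congr rfl fun a _ => ?_
  dsimp only
  rw [← Finset.sum_mul, pr_marg_left]

lemma sum_lift_right (hX : Ω → α) (hY : Ω → β) (f : β → ℝ) :
    ∑ ab : α × β, pr p (fun ω => (hX ω, hY ω)) ab * f ab.2
      = ∑ b : β, pr p hY b * f b := by
  rw [Fintype.sum_prod_type_right]
  refine Finset.sum_congr rfl fun b _ => ?_
  dsimp only
  rw [← Finset.sum_mul, pr_marg_right]

lemma mi_nonneg (hp : IsPMF p) (X : Ω → α) (Y : Ω → β) : 0 ≤ mi p X Y := by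
  classical
  have hlog2 : (0:ℝ) < Real.log 2 := Real.log_pos (by norm_num)
  have hu0 : ∀ ab : α × β, 0 < pr p (fun ω => (X ω, Y ω)) ab → 0 < pr p X ab.1 := by
    intro ab h
    refine lt_of_lt_of_le h (pr_le_pr p hp ?_)
    intro ω hω; rw [Prod.ext_iff] at hω; exact hω.1
  have hv0 : ∀ ab : α × β, 0 < pr p (fun ω => (X ω, Y ω)) ab → 0 < pr p Y ab.2 := by
    intro ab h
    refine lt_of_lt_of_le h (pr_le_pr p hp ?_)
    intro ω hω; rw [Prod.ext_iff] at hω; exact hω.2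
  have main : ∑ ab : α × β, (pr p (fun ω => (X ω, Y ω)) ab * Real.logb 2 (pr p X ab.1)
        + pr p (fun ω => (X ω, Y ω)) ab * Real.logb 2 (pr p Y ab.2))
      ≤ ∑ ab : α × β, pr p (fun ω => (X ω, Y ω)) ab
          * Real.logb 2 (pr p (fun ω => (X ω, Y ω)) ab) := by
    have hsplit : ∀ ab : α × β,
        pr p (fun ω => (X ω, Y ω)) ab * Real.logb 2 (pr p X ab.1)
          + pr p (fun ω => (X ω, Y ω)) ab * Real.logb 2 (pr p Y ab.2)
        = pr p (fun ω => (X ω, Y ω)) ab * Real.logb 2 (pr p X ab.1 * pr p Y ab.2) := by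
      intro ab
      rcases eq_or_lt_of_le (pr_nonneg p hp (fun ω => (X ω, Y ω)) ab) with h0 | h0
      · rw [← h0]; ring
      · rw [Real.logb_mul (ne_of_gt (hu0 ab h0)) (ne_of_gt (hv0 ab h0))]; ring
    calc ∑ ab : α × β, (pr p (fun ω => (X ω, Y ω)) ab * Real.logb 2 (pr p X ab.1)
        + pr p (fun ω => (X ω, Y ω)) ab * Real.logb 2 (pr p Y ab.2))
        = ∑ ab : α × β, pr p (fun ω => (X ω, Y ω)) ab
            * Real.logb 2 (pr p X ab.1 * pr p Y ab.2) :=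
          Finset.sum_congr rfl fun ab _ => hsplit ab
      _ ≤ ∑ ab : α × β, (pr p (fun ω => (X ω, Y ω)) ab
            * Real.logb 2 (pr p (fun ω => (X ω, Y ω)) ab)
            + (pr p X ab.1 * pr p Y ab.2 - pr p (fun ω => (X ω, Y ω)) ab) / Real.log 2) := by
          refine Finset.sum_le_sum fun ab _ => ?_
          have hb := point_bound (r := pr p (fun ω => (X ω, Y ω)) ab)
            (s := pr p X ab.1 * pr p Y ab.2)
            (pr_nonneg p hp _ _)
            (mul_nonneg (pr_nonneg p hp _ _) (pr_nonneg p hp _ _))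
            (fun h0 => mul_pos (hu0 ab h0) (hv0 ab h0))
          linarith
      _ = ∑ ab : α × β, pr p (fun ω => (X ω, Y ω)) ab
            * Real.logb 2 (pr p (fun ω => (X ω, Y ω)) ab) := by
          rw [Finset.sum_add_distrib, ← Finset.sum_div, Finset.sum_sub_distrib]
          have h1 : ∑ ab : α × β, pr p X ab.1 * pr p Y ab.2 = 1 := by
            rw [Fintype.sum_prod_type, ← Finset.sum_mul_sum, sum_pr p hp, sum_pr p hp, one_mul]
          rw [h1, sum_pr p hp]
          simp
  have hA := sum_lift_left p X Y (fun a => Real.logb 2 (pr p X a))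
  have hB := sum_lift_right p X Y (fun b => Real.logb 2 (pr p Y b))
  rw [Finset.sum_add_distrib, hA, hB] at main
  unfold mi ent
  linarith

end gibbs

section cross
variable {α β : Type*} [Fintype α] [DecidableEq α] [Fintype β] [DecidableEq β] (p : Ω → ℝ)

lemma cent_le_cross (hp : IsPMF p) (X : Ω → α) (Y : Ω → β) (Q : α × β → ℝ)
    (hQ0 : ∀ ab, 0 < Q ab) (hQ1 : ∀ b : β, ∑ a : α, Q (a, b) ≤ 1) :
    cent p X Y ≤ -∑ ab : α × β, pr p (fun ω => (X ω, Y ω)) ab * Real.logb 2 (Q ab) := by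
  classical
  have hlog2 : (0:ℝ) < Real.log 2 := Real.log_pos (by norm_num)
  have hm0 : ∀ ab : α × β, 0 < pr p (fun ω => (X ω, Y ω)) ab → 0 < pr p Y ab.2 := by
    intro ab h
    refine lt_of_lt_of_le h (pr_le_pr p hp ?_)
    intro ω hω; rw [Prod.ext_iff] at hω; exact hω.2
  have main : ∑ ab : α × β, (pr p (fun ω => (X ω, Y ω)) ab * Real.logb 2 (pr p Y ab.2)
        + pr p (fun ω => (X ω, Y ω)) ab * Real.logb 2 (Q ab))
      ≤ ∑ ab : α × β, pr p (fun ω => (X ω, Y ω)) ab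
          * Real.logb 2 (pr p (fun ω => (X ω, Y ω)) ab) := by
    have hsplit : ∀ ab : α × β,
        pr p (fun ω => (X ω, Y ω)) ab * Real.logb 2 (pr p Y ab.2)
          + pr p (fun ω => (X ω, Y ω)) ab * Real.logb 2 (Q ab)
        = pr p (fun ω => (X ω, Y ω)) ab * Real.logb 2 (Q ab * pr p Y ab.2) := by
      intro ab
      rcases eq_or_lt_of_le (pr_nonneg p hp (fun ω => (X ω, Y ω)) ab) with h0 | h0
      · rw [← h0]; ring
      · rw [Real.logb_mul (ne_of_gt (hQ0 ab)) (ne_of_gt (hm0 ab h0))]; ring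
    calc ∑ ab : α × β, (pr p (fun ω => (X ω, Y ω)) ab * Real.logb 2 (pr p Y ab.2)
        + pr p (fun ω => (X ω, Y ω)) ab * Real.logb 2 (Q ab))
        = ∑ ab : α × β, pr p (fun ω => (X ω, Y ω)) ab
            * Real.logb 2 (Q ab * pr p Y ab.2) :=
          Finset.sum_congr rfl fun ab _ => hsplit ab
      _ ≤ ∑ ab : α × β, (pr p (fun ω => (X ω, Y ω)) ab
            * Real.logb 2 (pr p (fun ω => (X ω, Y ω)) ab)
            + (Q ab * pr p Y ab.2 - pr p (fun ω => (X ω, Y ω)) ab) / Real.log 2) := by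
          refine Finset.sum_le_sum fun ab _ => ?_
          have hb := point_bound (r := pr p (fun ω => (X ω, Y ω)) ab)
            (s := Q ab * pr p Y ab.2)
            (pr_nonneg p hp _ _)
            (mul_nonneg (hQ0 ab).le (pr_nonneg p hp _ _))
            (fun h0 => mul_pos (hQ0 ab) (hm0 ab h0))
          linarith
      _ ≤ ∑ ab : α × β, pr p (fun ω => (X ω, Y ω)) ab
            * Real.logb 2 (pr p (fun ω => (X ω, Y ω)) ab) := by
          rw [Finset.sum_add_distrib, ← Finset.sum_div, Finset.sum_sub_distrib]
          have h1 : ∑ ab : α × β, Q ab * pr p Y ab.2 ≤ 1 := by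
            rw [Fintype.sum_prod_type_right]
            calc ∑ b : β, ∑ a : α, Q (a, b) * pr p Y (a, b).2
                = ∑ b : β, (∑ a : α, Q (a, b)) * pr p Y b := by
                  refine Finset.sum_congr rfl fun b _ => ?_
                  dsimp only
                  rw [Finset.sum_mul]
              _ ≤ ∑ b : β, 1 * pr p Y b := by
                  refine Finset.sum_le_sum fun b _ => ?_
                  exact mul_le_mul_of_nonneg_right (hQ1 b) (pr_nonneg p hp _ _)
              _ = 1 := by simp only [one_mul]; exact sum_pr p hp Y
          rw [sum_pr p hp]
          have : (∑ ab : α × β, Q ab * pr p Y ab.2 - 1) / Real.log 2 ≤ 0 :=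
            div_nonpos_of_nonpos_of_nonneg (by linarith) hlog2.le
          linarith
  have hB := sum_lift_right p X Y (fun b => Real.logb 2 (pr p Y b))
  rw [Finset.sum_add_distrib, hB] at main
  unfold cent ent
  linarith

end cross

section struct
variable {α α' β γ : Type*} [Fintype α] [DecidableEq α] [Fintype α'] [DecidableEq α']
  [Fintype β] [DecidableEq β] [Fintype γ] [DecidableEq γ] (p : Ω → ℝ)

lemma ent_congr {X : Ω → α} {X' : Ω → α'} (f : α' → α) (hf : Function.Injective f)
    (hX : ∀ ω, X ω = f (X' ω)) : ent p X = ent p X' := by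
  have : X = fun ω => f (X' ω) := funext hX
  rw [this, ent_comp p X' f hf]

lemma mi_congr_left {X : Ω → α} {X' : Ω → α'} (Y : Ω → β) (f : α' → α)
    (hf : Function.Injective f) (hX : ∀ ω, X ω = f (X' ω)) : mi p X Y = mi p X' Y := by
  unfold mi
  rw [ent_congr p f hf hX, ent_congr p (X' := fun ω => (X' ω, Y ω)) (Prod.map f id)
    (hf.prodMap Function.injective_id) (fun ω => by simp [hX ω])]

lemma mi_congr_right (X : Ω → α) {Y : Ω → β} {Y' : Ω → γ} (f : γ → β)
    (hf : Function.Injective f) (hY : ∀ ω, Y ω = f (Y' ω)) : mi p X Y = mi p X Y' := by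
  unfold mi
  rw [ent_congr p f hf hY, ent_congr p (X' := fun ω => (X ω, Y' ω)) (Prod.map id f)
    (Function.injective_id.prodMap hf) (fun ω => by simp [hY ω])]

lemma ent_pair_comm (X : Ω → α) (Y : Ω → β) :
    ent p (fun ω => (X ω, Y ω)) = ent p (fun ω => (Y ω, X ω)) :=
  ent_congr p (f := Prod.swap) Prod.swap_injective (fun ω => rfl)

lemma mi_comm (X : Ω → α) (Y : Ω → β) : mi p X Y = mi p Y X := by
  unfold mi
  rw [ent_pair_comm p X Y]
  ring

lemma chain_mi (X : Ω → α) (Y : Ω → β) (C : Ω → γ) :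
    mi p (fun ω => (X ω, Y ω)) C = mi p X C + cmi p Y C X := by
  unfold mi cmi
  have h1 : ent p (fun ω => (X ω, Y ω)) = ent p (fun ω => (Y ω, X ω)) := ent_pair_comm p X Y
  have h2 : ent p (fun ω => ((X ω, Y ω), C ω)) = ent p (fun ω => (Y ω, C ω, X ω)) := by
    refine ent_congr p (f := fun u : β × γ × α => ((u.2.2, u.1), u.2.1)) ?_ (fun ω => rfl)
    intro u v h
    simp only [Prod.ext_iff] at h ⊢
    exact ⟨h.1.2, h.2, h.1.1⟩
  rw [h1, h2, ent_pair_comm p X C]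
  ring

lemma cmi_comm (X : Ω → α) (Y : Ω → β) (C : Ω → γ) : cmi p X Y C = cmi p Y X C := by
  unfold cmi
  have h2 : ent p (fun ω => (X ω, Y ω, C ω)) = ent p (fun ω => (Y ω, X ω, C ω)) := by
    refine ent_congr p (f := fun u : β × α × γ => (u.2.1, u.1, u.2.2)) ?_ (fun ω => rfl)
    intro u v h
    simp only [Prod.ext_iff] at h ⊢
    exact ⟨h.2.1, h.1, h.2.2⟩
  rw [h2]
  ring

lemma ent_unique [Unique β] (hp : IsPMF p) (Y : Ω → β) : ent p Y = 0 := by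
  unfold ent
  rw [Fintype.sum_unique]
  have : pr p Y default = 1 := by
    unfold pr
    rw [← hp.2]
    refine Finset.sum_congr rfl fun ω _ => ?_
    simp [Unique.eq_default (Y ω)]
  rw [this]
  simp

lemma mi_unique_right [Unique β] (hp : IsPMF p) (X : Ω → α) (Y : Ω → β) : mi p X Y = 0 := by
  unfold mi
  rw [ent_unique p hp Y]
  have : ent p (fun ω => (X ω, Y ω)) = ent p X := by
    refine ent_congr p (f := fun a : α => (a, default)) ?_ ?_
    · intro a b h; simpa [Prod.ext_iff] using h
    · intro ω; simp [Unique.eq_default (Y ω)]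
  rw [this]
  ring

lemma mi_eq_zero_of_indep (hp : IsPMF p) (X : Ω → α) (Y : Ω → β)
    (h : ∀ a b, pr p (fun ω => (X ω, Y ω)) (a, b) = pr p X a * pr p Y b) :
    mi p X Y = 0 := by
  unfold mi
  have key : ent p (fun ω => (X ω, Y ω)) = ent p X + ent p Y := by
    unfold ent
    have : ∀ ab : α × β, pr p (fun ω => (X ω, Y ω)) ab
        * Real.logb 2 (pr p (fun ω => (X ω, Y ω)) ab)
        = pr p X ab.1 * pr p Y ab.2 * Real.logb 2 (pr p X ab.1)
          + pr p X ab.1 * pr p Y ab.2 * Real.logb 2 (pr p Y ab.2) := by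
      intro ⟨a, b⟩
      rw [h a b]
      dsimp only
      by_cases ha : pr p X a = 0
      · simp [ha]
      · by_cases hb : pr p Y b = 0
        · simp [hb]
        · rw [Real.logb_mul ha hb]; ring
    rw [Finset.sum_congr rfl fun ab _ => this ab, Finset.sum_add_distrib]
    have h1 : ∑ ab : α × β, pr p X ab.1 * pr p Y ab.2 * Real.logb 2 (pr p X ab.1)
        = ∑ a : α, pr p X a * Real.logb 2 (pr p X a) := by
      rw [Fintype.sum_prod_type]
      refine Finset.sum_congr rfl fun a _ => ?_
      dsimp only
      rw [← Finset.sum_mul]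
      rw [show ∑ b : β, pr p X a * pr p Y b = pr p X a * ∑ b : β, pr p Y b from
        Finset.mul_sum _ _ _ |>.symm]
      rw [sum_pr p hp Y]
      ring
    have h2 : ∑ ab : α × β, pr p X ab.1 * pr p Y ab.2 * Real.logb 2 (pr p Y ab.2)
        = ∑ b : β, pr p Y b * Real.logb 2 (pr p Y b) := by
      rw [Fintype.sum_prod_type_right]
      refine Finset.sum_congr rfl fun b _ => ?_
      dsimp only
      have : ∀ a : α, pr p X a * pr p Y b * Real.logb 2 (pr p Y b)
          = pr p X a * (pr p Y b * Real.logb 2 (pr p Y b)) := fun a => by ring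
      rw [Finset.sum_congr rfl fun a _ => this a, ← Finset.sum_mul, sum_pr p hp X]
      ring
    rw [h1, h2]
    ring
  rw [key]
  ring

end struct

section pattern
variable {𝒮 : Type*} [Fintype 𝒮] [DecidableEq 𝒮] {n M2 : ℕ}

lemma sum_prod_ite (q : 𝒮 → ℝ) (C : Fin n → 𝒮 → Prop) [∀ i a, Decidable (C i a)] :
    ∑ v : Fin n → 𝒮, (if (∀ i, C i (v i)) then ∏ i, q (v i) else 0)
      = ∏ i : Fin n, ∑ a : 𝒮, (if C i a then q a else 0) := by
  classical
  rw [Finset.prod_univ_sum]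
  rw [Fintype.piFinset_univ]
  refine Finset.sum_congr rfl fun v _ => ?_
  by_cases hv : ∀ i, C i (v i)
  · rw [if_pos hv]
    refine (Finset.prod_congr rfl fun i _ => ?_).symm
    rw [if_pos (hv i)]
  · rw [if_neg hv]
    push_neg at hv
    obtain ⟨i0, hi0⟩ := hv
    exact (Finset.prod_eq_zero (Finset.mem_univ i0) (by rw [if_neg hi0])).symm

variable {Ω : Type*} [Fintype Ω] (p : Ω → ℝ) (W2 : Ω → Fin M2) (S : Fin n → Ω → 𝒮)

lemma pr_eq_sum_cond {β : Type*} [DecidableEq β] (Y : Ω → β) (b : β)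
    (P : Fin M2 → Prop) [DecidablePred P] (C : Fin n → 𝒮 → Prop) [∀ i a, Decidable (C i a)]
    (hY : ∀ ω, Y ω = b ↔ (P (W2 ω) ∧ ∀ i, C i (S i ω))) :
    pr p Y b = ∑ w : Fin M2, ∑ v : Fin n → 𝒮,
      (if P w ∧ (∀ i, C i (v i))
        then pr p (fun ω => (W2 ω, fun j => S j ω)) (w, v) else 0) := by
  classical
  symm
  calc ∑ w : Fin M2, ∑ v : Fin n → 𝒮,
      (if P w ∧ (∀ i, C i (v i))
        then pr p (fun ω => (W2 ω, fun j => S j ω)) (w, v) else 0)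
      = ∑ w : Fin M2, ∑ v : Fin n → 𝒮, ∑ ω : Ω,
          (if (W2 ω, fun j => S j ω) = (w, v) then
            (if P w ∧ (∀ i, C i (v i)) then p ω else 0) else 0) := by
        refine Finset.sum_congr rfl fun w _ => Finset.sum_congr rfl fun v _ => ?_
        by_cases h : P w ∧ (∀ i, C i (v i)) <;> simp [pr, h]
    _ = ∑ w : Fin M2, ∑ ω : Ω, ∑ v : Fin n → 𝒮,
          (if (W2 ω, fun j => S j ω) = (w, v) then
            (if P w ∧ (∀ i, C i (v i)) then p ω else 0) else 0) :=
        Finset.sum_congr rfl fun w _ => Finset.sum_comm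
    _ = ∑ ω : Ω, ∑ w : Fin M2, ∑ v : Fin n → 𝒮,
          (if (W2 ω, fun j => S j ω) = (w, v) then
            (if P w ∧ (∀ i, C i (v i)) then p ω else 0) else 0) :=
        Finset.sum_comm
    _ = ∑ ω : Ω, (if Y ω = b then p ω else 0) := by
        refine Finset.sum_congr rfl fun ω _ => ?_
        rw [Finset.sum_comm]
        simp only [Prod.mk.injEq, ite_and, Finset.sum_ite_eq, Finset.sum_ite_eq',
          Finset.mem_univ, if_true]
        by_cases h : P (W2 ω) ∧ ∀ i, C i (S i ω)
        · rw [if_pos ((hY ω).2 h), if_pos h.1, if_pos h.2]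
        · rw [if_neg (fun hY' => h ((hY ω).1 hY'))]
          by_cases h1 : P (W2 ω)
          · have h2 : ¬ ∀ i, C i (S i ω) := fun h2 => h ⟨h1, h2⟩
            rw [if_pos h1, if_neg h2]
          · rw [if_neg h1]
    _ = pr p Y b := rfl

lemma pr_pattern (q : 𝒮 → ℝ)
    (hq : ∀ (w : Fin M2) (s : Fin n → 𝒮),
      pr p (fun ω => (W2 ω, fun j => S j ω)) (w, s) = (1 / M2) * ∏ j, q (s j))
    {β : Type*} [DecidableEq β] (Y : Ω → β) (b : β)
    (P : Fin M2 → Prop) [DecidablePred P] (C : Fin n → 𝒮 → Prop) [∀ i a, Decidable (C i a)]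
    (hY : ∀ ω, Y ω = b ↔ (P (W2 ω) ∧ ∀ i, C i (S i ω))) :
    pr p Y b = ((Finset.univ.filter P).card : ℝ) * ((1 / M2)
      * ∏ i : Fin n, ∑ a : 𝒮, (if C i a then q a else 0)) := by
  classical
  rw [pr_eq_sum_cond p W2 S Y b P C hY]
  have inner : ∀ w : Fin M2,
      (∑ v : Fin n → 𝒮, (if P w ∧ (∀ i, C i (v i))
        then pr p (fun ω => (W2 ω, fun j => S j ω)) (w, v) else 0))
      = if P w then ((1 / M2) * ∏ i : Fin n, ∑ a : 𝒮, (if C i a then q a else 0)) else 0 := by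
    intro w
    by_cases hPw : P w
    · rw [if_pos hPw, ← sum_prod_ite q C, Finset.mul_sum]
      refine Finset.sum_congr rfl fun v _ => ?_
      by_cases hv : ∀ i, C i (v i)
      · rw [if_pos ⟨hPw, hv⟩, if_pos hv, hq]
      · rw [if_neg (fun h => hv h.2), if_neg hv, mul_zero]
    · rw [if_neg hPw]
      exact Finset.sum_eq_zero fun v _ => if_neg (fun h => hPw h.1)
  rw [Finset.sum_congr rfl fun w _ => inner w]
  rw [← Finset.sum_filter, Finset.sum_const, nsmul_eq_mul]

end pattern

section indep
variable {Ω 𝒮 : Type*} [Fintype Ω] [Fintype 𝒮] [DecidableEq 𝒮] {n M2 : ℕ}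

lemma indep_mi_zero (p : Ω → ℝ) (hp : IsPMF p) (hM2 : 0 < M2)
    (W2 : Ω → Fin M2) (S : Fin n → Ω → 𝒮) (q : 𝒮 → ℝ)
    (hq : ∀ (w : Fin M2) (s : Fin n → 𝒮),
      pr p (fun ω => (W2 ω, fun j => S j ω)) (w, s) = (1 / M2) * ∏ j, q (s j))
    (j : Fin n) :
    mi p (fun ω => (W2 ω, fun i : {i : Fin n // (j : ℕ) + 1 ≤ (i : ℕ)} => S i.1 ω))
      (S j) = 0 := by
  classical
  set c : ℝ := ∑ a : 𝒮, q a with hcdef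
  have hM2' : (M2 : ℝ) ≠ 0 := Nat.cast_ne_zero.mpr hM2.ne'
  have hn : 0 < n := lt_of_le_of_lt (Nat.zero_le _) j.2
  -- c ^ n = 1
  have hone : pr p (fun _ : Ω => (0 : Fin 1)) 0 = 1 := by
    unfold pr
    rw [← hp.2]
    exact Finset.sum_congr rfl fun ω _ => by simp
  have hcn : c ^ n = 1 := by
    have := pr_pattern p W2 S q hq (fun _ : Ω => (0 : Fin 1)) 0
      (fun _ => True) (fun _ _ => True) (fun ω => by simp)
    rw [hone] at this
    simp [Finset.filter_true, Finset.card_univ, hcdef] at this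
    field_simp at this
    linarith [this]
  -- prS : marginal of S j
  have prS : ∀ s : 𝒮, pr p (S j) s
      = (M2 : ℝ) * ((1 / M2) * ∏ i : Fin n, (if i = j then q s else c)) := by
    intro s
    have h := pr_pattern p W2 S q hq (S j) s (fun _ => True)
      (fun i a => i = j → a = s)
      (fun ω => ⟨fun h => ⟨trivial, fun i hij => by rw [hij]; exact h⟩,
                 fun ⟨_, h⟩ => h j rfl⟩)
    rw [h]
    congr 1
    · simp [Finset.filter_true, Finset.card_univ]
    congr 1
    refine Finset.prod_congr rfl fun i _ => ?_
    by_cases hij : i = j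
    · subst hij
      simp
    · simp [hij, hcdef]
  -- joint of ((W2, S-tail), S j)
  have prJ3 : ∀ (w : Fin M2) (f : {i : Fin n // (j : ℕ) + 1 ≤ (i : ℕ)} → 𝒮) (s : 𝒮),
      pr p (fun ω => ((W2 ω, fun i : {i : Fin n // (j : ℕ) + 1 ≤ (i : ℕ)} => S i.1 ω), S j ω))
        ((w, f), s)
      = (1 / M2) * ∏ i : Fin n,
          (if hi : (j : ℕ) + 1 ≤ (i : ℕ) then q (f ⟨i, hi⟩) else (if i = j then q s else c)) := by
    intro w f s
    haveI : ∀ (i : Fin n) (a : 𝒮), Decidable (∀ hi : (j : ℕ) + 1 ≤ (i : ℕ), a = f ⟨i, hi⟩) :=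
      fun i a =>
        if hi : (j : ℕ) + 1 ≤ (i : ℕ) then
          decidable_of_iff (a = f ⟨i, hi⟩) ⟨fun h _ => h, fun h => h hi⟩
        else isTrue (fun h => absurd h hi)
    have h := pr_pattern p W2 S q hq
      (fun ω => ((W2 ω, fun i : {i : Fin n // (j : ℕ) + 1 ≤ (i : ℕ)} => S i.1 ω), S j ω))
      ((w, f), s) (fun w' => w' = w)
      (fun i a => (∀ hi : (j : ℕ) + 1 ≤ (i : ℕ), a = f ⟨i, hi⟩) ∧ (i = j → a = s))
      ?_
    · rw [h]
      have hcard : ((Finset.univ.filter (fun w' : Fin M2 => w' = w)).card : ℝ) = 1 := by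
        simp [Finset.filter_eq']
      rw [hcard, one_mul]
      congr 1
      refine Finset.prod_congr rfl fun i _ => ?_
      by_cases hi : (j : ℕ) + 1 ≤ (i : ℕ)
      · have hij : i ≠ j := fun h => by subst h; omega
        rw [dif_pos hi]
        have : ∀ a : 𝒮, ((∀ hi' : (j : ℕ) + 1 ≤ (i : ℕ), a = f ⟨i, hi'⟩) ∧ (i = j → a = s))
            ↔ a = f ⟨i, hi⟩ :=
          fun a => ⟨fun h' => h'.1 hi, fun h' => ⟨fun _ => h', fun hij' => absurd hij' hij⟩⟩
        simp only [this]
        simp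
      · rw [dif_neg hi]
        by_cases hij : i = j
        · subst hij
          have : ∀ a : 𝒮, ((∀ hi' : (i : ℕ) + 1 ≤ (i : ℕ), a = f ⟨i, hi'⟩) ∧ (i = i → a = s))
              ↔ a = s := fun a =>
            ⟨fun h' => h'.2 rfl, fun h' => ⟨fun hi' => absurd hi' (by omega), fun _ => h'⟩⟩
          simp only [this, if_pos rfl]
          simp
        · have : ∀ a : 𝒮, ((∀ hi' : (j : ℕ) + 1 ≤ (i : ℕ), a = f ⟨i, hi'⟩) ∧ (i = j → a = s))
              ↔ True := fun a =>
            ⟨fun _ => trivial, fun _ => ⟨fun hi' => absurd hi' hi, fun hij' => absurd hij' hij⟩⟩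
          simp only [this, if_neg hij]
          simp [hcdef]
    · intro ω
      constructor
      · intro h'
        rw [Prod.ext_iff] at h'
        obtain ⟨h1, h3⟩ := h'
        rw [Prod.ext_iff] at h1
        obtain ⟨h1, h2⟩ := h1
        refine ⟨h1, fun i => ⟨fun hi => ?_, fun hij => ?_⟩⟩
        · exact congrFun h2 ⟨i, hi⟩
        · rw [hij]; exact h3
      · rintro ⟨h1, h2⟩
        refine Prod.ext (Prod.ext h1 (funext fun i => ?_)) ((h2 j).2 rfl)
        exact (h2 i.1).1 i.2
  -- assembly
  refine mi_eq_zero_of_indep p hp _ _ (fun a s => ?_)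
  obtain ⟨w, f⟩ := a
  set D' : Fin n → ℝ := fun i =>
    if hi : (j : ℕ) + 1 ≤ (i : ℕ) then q (f ⟨i, hi⟩) else c with hD'
  have hD : ∀ (s' : 𝒮) (i : Fin n),
      (if hi : (j : ℕ) + 1 ≤ (i : ℕ) then q (f ⟨i, hi⟩) else (if i = j then q s' else c))
      = if i = j then q s' else D' i := by
    intro s' i
    by_cases hij : i = j
    · subst hij
      rw [if_pos rfl, dif_neg (by omega), if_pos rfl]
    · rw [if_neg hij]
      by_cases hi : (j : ℕ) + 1 ≤ (i : ℕ)
      · simp [D', dif_pos hi, hij]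
      · simp [D', dif_neg hi, hij]
  have hprod : ∀ s' : 𝒮, (∏ i : Fin n,
      (if hi : (j : ℕ) + 1 ≤ (i : ℕ) then q (f ⟨i, hi⟩) else (if i = j then q s' else c)))
      = q s' * ∏ i ∈ Finset.univ.erase j, D' i := by
    intro s'
    rw [Finset.prod_congr rfl (fun i _ => hD s' i)]
    rw [← Finset.mul_prod_erase Finset.univ _ (Finset.mem_univ j), if_pos rfl]
    congr 1
    refine Finset.prod_congr rfl fun i hi => ?_
    rw [if_neg (Finset.ne_of_mem_erase hi)]
  have herase : ∀ x : ℝ, (∏ _i ∈ Finset.univ.erase j, x) = x ^ (n - 1) := by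
    intro x
    rw [Finset.prod_const, Finset.card_erase_of_mem (Finset.mem_univ j),
      Finset.card_univ, Fintype.card_fin]
  -- marginal prA
  have prA : pr p (fun ω => (W2 ω, fun i : {i : Fin n // (j : ℕ) + 1 ≤ (i : ℕ)} => S i.1 ω))
      (w, f) = (1 / M2) * (c * ∏ i ∈ Finset.univ.erase j, D' i) := by
    rw [← pr_marg_left p
      (fun ω => (W2 ω, fun i : {i : Fin n // (j : ℕ) + 1 ≤ (i : ℕ)} => S i.1 ω)) (S j) (w, f)]
    rw [Finset.sum_congr rfl fun s' _ => prJ3 w f s']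
    rw [← Finset.mul_sum]
    congr 1
    rw [Finset.sum_congr rfl fun s' _ => hprod s', ← Finset.sum_mul]
  rw [prA, prJ3 w f s, prS s, hprod s]
  have hSprod : (∏ i : Fin n, (if i = j then q s else c))
      = q s * c ^ (n - 1) := by
    rw [← Finset.mul_prod_erase Finset.univ _ (Finset.mem_univ j), if_pos rfl]
    congr 1
    rw [Finset.prod_congr rfl (fun i hi => if_neg (Finset.ne_of_mem_erase hi)), herase c]
  rw [hSprod]
  have hc1 : c * c ^ (n - 1) = 1 := by
    rw [← pow_succ', Nat.sub_add_cancel hn]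
    exact hcn
  set P := ∏ i ∈ Finset.univ.erase j, D' i with hP
  field_simp
  linear_combination (-(q s * P)) * hc1
end indep

section fano
variable {Ω 𝒵 : Type*} [Fintype Ω] [Fintype 𝒵] [DecidableEq 𝒵] {M2 : ℕ}

lemma fano_bound (hM2 : 0 < M2) (p : Ω → ℝ) (hp : IsPMF p)
    (W2 : Ω → Fin M2) (Zv : Ω → 𝒵) (g : 𝒵 → Fin M2) :
    cent p W2 Zv ≤ 1 + Real.logb 2 M2 * (∑ ω : Ω, if g (Zv ω) ≠ W2 ω then p ω else 0) := by
  classical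
  set d : ℝ := 1 / (2 * ((M2 : ℝ) - 1)) with hd
  set Q : Fin M2 × 𝒵 → ℝ := fun ab => if ab.1 = g ab.2 then 1/2 else d with hQ
  have hM2one : ∀ (w : Fin M2) (z : 𝒵), w ≠ g z → 2 ≤ M2 := by
    intro w z hne
    by_contra h
    interval_cases M2
    · exact absurd (Subsingleton.elim w (g z)) hne
  have hQpos : ∀ ab : Fin M2 × 𝒵, 0 < Q ab := by
    intro ab
    simp only [hQ]
    by_cases h : ab.1 = g ab.2
    · rw [if_pos h]; norm_num
    · rw [if_neg h, hd]
      have h2 : 2 ≤ M2 := hM2one _ _ h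
      have : (1:ℝ) ≤ (M2:ℝ) - 1 := by
        have : (2:ℝ) ≤ (M2:ℝ) := by exact_mod_cast h2
        linarith
      positivity
  have hQsum : ∀ z : 𝒵, ∑ w : Fin M2, Q (w, z) ≤ 1 := by
    intro z
    have hsum : ∑ w : Fin M2, Q (w, z) = (M2 : ℝ) * d + (1/2 - d) := by
      have : ∀ w : Fin M2, Q (w, z) = d + (if w = g z then 1/2 - d else 0) := by
        intro w
        simp only [hQ]
        by_cases h : w = g z <;> simp [h]
      rw [Finset.sum_congr rfl fun w _ => this w, Finset.sum_add_distrib]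
      congr 1
      · rw [Finset.sum_const, Finset.card_univ, Fintype.card_fin, nsmul_eq_mul]
      · simp
    rw [hsum]
    by_cases h1 : M2 = 1
    · subst h1
      simp [hd]
      norm_num
    · have h2 : 2 ≤ M2 := by omega
      have h2r : (2:ℝ) ≤ (M2:ℝ) := by exact_mod_cast h2
      have hne : ((M2:ℝ) - 1) ≠ 0 := ne_of_gt (by linarith)
      have : (M2 : ℝ) * d + (1/2 - d) = 1 := by
        rw [hd]
        field_simp
        ring
      linarith
  have hcross := cent_le_cross p hp W2 Zv Q hQpos hQsum
  have hptwise : ∀ ab : Fin M2 × 𝒵,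
      -(Real.logb 2 (Q ab)) ≤ 1 + (if ab.1 ≠ g ab.2 then Real.logb 2 M2 else 0) := by
    intro ab
    by_cases h : ab.1 = g ab.2
    · have hQab : Q ab = 1/2 := by simp [hQ, h]
      rw [hQab, if_neg (not_ne_iff.mpr h)]
      have hlb : Real.logb 2 ((1:ℝ)/2) = -1 := by
        rw [one_div, Real.logb_inv, Real.logb_self_eq_one (by norm_num)]
      rw [hlb]; norm_num
    · have hQab : Q ab = d := by simp [hQ, h]
      rw [hQab, if_pos h]
      have h2 : 2 ≤ M2 := hM2one _ _ h
      have h2r : (2:ℝ) ≤ (M2:ℝ) := by exact_mod_cast h2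
      have hpos : (0:ℝ) < (M2:ℝ) - 1 := by linarith
      rw [hd, one_div, Real.logb_inv]
      rw [Real.logb_mul (by norm_num) (ne_of_gt hpos)]
      rw [Real.logb_self_eq_one (by norm_num)]
      have hmono : Real.logb 2 ((M2:ℝ) - 1) ≤ Real.logb 2 (M2:ℝ) :=
        Real.logb_le_logb_of_le (by norm_num) hpos (by linarith)
      linarith
  calc cent p W2 Zv ≤ -∑ ab : Fin M2 × 𝒵, pr p (fun ω => (W2 ω, Zv ω)) ab
        * Real.logb 2 (Q ab) := hcross
    _ = ∑ ab : Fin M2 × 𝒵, pr p (fun ω => (W2 ω, Zv ω)) ab * (-(Real.logb 2 (Q ab))) := by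
        rw [← Finset.sum_neg_distrib]
        exact Finset.sum_congr rfl fun ab _ => by ring
    _ ≤ ∑ ab : Fin M2 × 𝒵, pr p (fun ω => (W2 ω, Zv ω)) ab
        * (1 + (if ab.1 ≠ g ab.2 then Real.logb 2 M2 else 0)) := by
        refine Finset.sum_le_sum fun ab _ => ?_
        exact mul_le_mul_of_nonneg_left (hptwise ab) (pr_nonneg p hp _ _)
    _ = 1 + Real.logb 2 M2 * (∑ ω : Ω, if g (Zv ω) ≠ W2 ω then p ω else 0) := by
        have expand : ∀ ab : Fin M2 × 𝒵, pr p (fun ω => (W2 ω, Zv ω)) ab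
            * (1 + (if ab.1 ≠ g ab.2 then Real.logb 2 M2 else 0))
            = pr p (fun ω => (W2 ω, Zv ω)) ab
              + Real.logb 2 M2 * (if ab.1 ≠ g ab.2 then pr p (fun ω => (W2 ω, Zv ω)) ab else 0) := by
          intro ab
          by_cases h : ab.1 ≠ g ab.2 <;> simp [h] <;> ring
        rw [Finset.sum_congr rfl fun ab _ => expand ab, Finset.sum_add_distrib,
          sum_pr p hp, ← Finset.mul_sum]
        congr 1
        have hPe : ∑ ab : Fin M2 × 𝒵, (if ab.1 ≠ g ab.2 then pr p (fun ω => (W2 ω, Zv ω)) ab else 0)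
            = ∑ ω : Ω, if g (Zv ω) ≠ W2 ω then p ω else 0 := by
          have h1 : ∀ ab : Fin M2 × 𝒵, (if ab.1 ≠ g ab.2 then pr p (fun ω => (W2 ω, Zv ω)) ab else 0)
              = ∑ ω : Ω, (if (W2 ω, Zv ω) = ab then (if ab.1 ≠ g ab.2 then p ω else 0) else 0) := by
            intro ab
            by_cases h : ab.1 ≠ g ab.2 <;> simp [pr, h]
          rw [Finset.sum_congr rfl fun ab _ => h1 ab, Finset.sum_comm]
          refine Finset.sum_congr rfl fun ω _ => ?_
          rw [Fintype.sum_prod_type]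
          simp only [Prod.mk.injEq, ite_and, Finset.sum_ite_eq, Finset.sum_ite_eq',
            Finset.mem_univ, if_true]
          by_cases h : g (Zv ω) = W2 ω
          · simp [h, not_ne_iff.mpr h.symm]
          · simp [h, Ne.symm h]
        rw [hPe]

end fano


set_option maxHeartbeats 1000000

/-- Fano plus Csiszár-sum bound on R2:
(1/n)·H(W2) ≤ (1/n)·Σ_j [ I(W2,Z^{j−1},S_{j+1}^n ; Z_j) − I(W2,Z^{j−1},S_{j+1}^n ; S_j) ] + ε_n,
with n·ε_n = 1 + n·R2·P_e^n. -/
theorem bc_R2_fano_csiszar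
    {Ω 𝒮 𝒵 : Type*} [Fintype Ω]
    [Fintype 𝒮] [DecidableEq 𝒮] [Fintype 𝒵] [DecidableEq 𝒵]
    (p : Ω → ℝ) (hp : IsPMF p) (n M2 : ℕ) (hn : 0 < n) (hM2 : 0 < M2)
    (W2 : Ω → Fin M2) (S : Fin n → Ω → 𝒮) (Z : Fin n → Ω → 𝒵)
    (hiid : ∃ q : 𝒮 → ℝ, ∀ (w : Fin M2) (s : Fin n → 𝒮),
      pr p (fun ω => (W2 ω, fun j => S j ω)) (w, s) = (1 / M2) * ∏ j, q (s j))
    (g : (Fin n → 𝒵) → Fin M2) :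
    (1 / (n : ℝ)) * ent p W2
      ≤ (1 / (n : ℝ)) * ∑ j : Fin n,
          (mi p (fun ω => (W2 ω, (fun i : {i : Fin n // i < j} => Z i.1 ω),
              (fun i : {i : Fin n // j < i} => S i.1 ω))) (Z j)
           - mi p (fun ω => (W2 ω, (fun i : {i : Fin n // i < j} => Z i.1 ω),
              (fun i : {i : Fin n // j < i} => S i.1 ω))) (S j))
        + (1 + (n : ℝ) * (Real.logb 2 M2 / n)
            * (∑ ω, if g (fun j => Z j ω) ≠ W2 ω then p ω else 0)) / n := by
  classical
  obtain ⟨q, hq⟩ := hiid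
  -- the full Z vector
  have hfano := fano_bound hM2 p hp W2 (fun ω => fun j => Z j ω) g
  have hdecomp : ent p W2 = mi p W2 (fun ω => fun j => Z j ω)
      + cent p W2 (fun ω => fun j => Z j ω) := by
    unfold mi cent; ring
  -- telescoping quantity
  set F : ℕ → ℝ := fun k =>
    mi p (fun ω => (W2 ω, fun i : {i : Fin n // k ≤ (i : ℕ)} => S i.1 ω))
      (fun ω => fun i : {i : Fin n // (i : ℕ) < k} => Z i.1 ω) with hF
  have hF0 : F 0 = 0 := by
    rw [hF]
    haveI : IsEmpty {i : Fin n // (i : ℕ) < 0} := ⟨fun i => absurd i.2 (by omega)⟩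
    exact mi_unique_right p hp _ _
  have hFn : F n = mi p W2 (fun ω => fun j => Z j ω) := by
    simp only [hF]
    haveI : IsEmpty {i : Fin n // n ≤ (i : ℕ)} := ⟨fun i => absurd i.2 (by omega)⟩
    have h1 : mi p (fun ω => (W2 ω, fun i : {i : Fin n // n ≤ (i : ℕ)} => S i.1 ω))
        (fun ω => fun i : {i : Fin n // (i : ℕ) < n} => Z i.1 ω)
        = mi p W2 (fun ω => fun i : {i : Fin n // (i : ℕ) < n} => Z i.1 ω) := by
      refine mi_congr_left p _ (fun w : Fin M2 => (w, (default : {i : Fin n // n ≤ (i : ℕ)} → 𝒮)))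
        (fun a b h => by simpa [Prod.ext_iff] using h) (fun ω => ?_)
      exact Prod.ext rfl (Subsingleton.elim _ _)
    rw [h1]
    refine mi_congr_right p _ (fun v : Fin n → 𝒵 => fun i : {i : Fin n // (i : ℕ) < n} => v i.1)
      (fun u v h => funext fun x => by simpa using congrFun h ⟨x, x.2⟩) (fun ω => rfl)
  -- per-step inequality
  have hstep : ∀ j : Fin n, F ((j : ℕ) + 1) - F (j : ℕ)
      ≤ (mi p (fun ω => (W2 ω, (fun i : {i : Fin n // i < j} => Z i.1 ω),
              (fun i : {i : Fin n // j < i} => S i.1 ω))) (Z j)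
         - mi p (fun ω => (W2 ω, (fun i : {i : Fin n // i < j} => Z i.1 ω),
              (fun i : {i : Fin n // j < i} => S i.1 ω))) (S j)) := by
    intro j
    set ZL : Ω → ({i : Fin n // (i : ℕ) < (j : ℕ)} → 𝒵) := fun ω i => Z i.1 ω with hZL
    set WS : Ω → Fin M2 × ({i : Fin n // (j : ℕ) + 1 ≤ (i : ℕ)} → 𝒮) :=
      fun ω => (W2 ω, fun i => S i.1 ω) with hWS
    -- rewrite the two statement mutual informations
    have e1 : mi p (fun ω => (W2 ω, (fun i : {i : Fin n // i < j} => Z i.1 ω),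
        (fun i : {i : Fin n // j < i} => S i.1 ω))) (Z j)
        = mi p ZL (Z j) + cmi p WS (Z j) ZL := by
      rw [← chain_mi]
      refine mi_congr_left p _
        (fun u : ({i : Fin n // (i : ℕ) < (j : ℕ)} → 𝒵)
            × (Fin M2 × ({i : Fin n // (j : ℕ) + 1 ≤ (i : ℕ)} → 𝒮)) =>
          (u.2.1, u.1, u.2.2))
        (fun u v h => by
          simp only [Prod.ext_iff] at h ⊢
          exact ⟨h.2.1, h.1, h.2.2⟩)
        (fun ω => rfl)
    have e3 : mi p (fun ω => (W2 ω, (fun i : {i : Fin n // i < j} => Z i.1 ω),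
        (fun i : {i : Fin n // j < i} => S i.1 ω))) (S j)
        = mi p WS (S j) + cmi p ZL (S j) WS := by
      rw [← chain_mi]
      refine mi_congr_left p _
        (fun u : (Fin M2 × ({i : Fin n // (j : ℕ) + 1 ≤ (i : ℕ)} → 𝒮))
            × ({i : Fin n // (i : ℕ) < (j : ℕ)} → 𝒵) =>
          (u.1.1, u.2, u.1.2))
        (fun u v h => by
          simp only [Prod.ext_iff] at h ⊢
          exact ⟨⟨h.1, h.2.2⟩, h.2.1⟩)
        (fun ω => rfl)
    have e5 : mi p WS (S j) = 0 := indep_mi_zero p hp hM2 W2 S q hq j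
    -- F (j+1)
    have e6 : F ((j : ℕ) + 1) = mi p ZL WS + cmi p (Z j) WS ZL := by
      simp only [hF]
      have h7 : mi p (fun ω => (W2 ω, fun i : {i : Fin n // (j : ℕ) + 1 ≤ (i : ℕ)} => S i.1 ω))
          (fun ω => fun i : {i : Fin n // (i : ℕ) < (j : ℕ) + 1} => Z i.1 ω)
          = mi p WS (fun ω => (ZL ω, Z j ω)) := by
        refine mi_congr_right p _
          (fun u : ({i : Fin n // (i : ℕ) < (j : ℕ)} → 𝒵) × 𝒵 =>
            fun i : {i : Fin n // (i : ℕ) < (j : ℕ) + 1} =>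
              if hi : (i : ℕ) < (j : ℕ) then u.1 ⟨i.1, hi⟩ else u.2)
          ?_ ?_
        · apply Function.LeftInverse.injective
            (g := fun w : ({i : Fin n // (i : ℕ) < (j : ℕ) + 1} → 𝒵) =>
              ((fun i : {i : Fin n // (i : ℕ) < (j : ℕ)} => w ⟨i.1, by omega⟩),
                w ⟨j, by omega⟩))
          intro u
          refine Prod.ext (funext fun i => ?_) ?_
          · show (if hi : ((i : Fin n) : ℕ) < (j : ℕ) then u.1 ⟨i.1, hi⟩ else u.2) = u.1 i
            rw [dif_pos i.2]
          · show (if hi : ((j : Fin n) : ℕ) < (j : ℕ) then u.1 ⟨j, hi⟩ else u.2) = u.2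
            rw [dif_neg (lt_irrefl _)]
        · intro ω
          funext i
          show Z i.1 ω = if hi : ((i : Fin n) : ℕ) < (j : ℕ) then ZL ω ⟨i.1, hi⟩ else Z j ω
          split
          · next hi => rfl
          · next hi =>
              have hij : i.1 = j := Fin.ext (by omega)
              rw [hij]
      rw [h7, mi_comm, chain_mi]
    -- F j
    have e9 : F (j : ℕ) = mi p WS ZL + cmi p (S j) ZL WS := by
      simp only [hF]
      have h10 : mi p (fun ω => (W2 ω, fun i : {i : Fin n // (j : ℕ) ≤ (i : ℕ)} => S i.1 ω))
          (fun ω => fun i : {i : Fin n // (i : ℕ) < (j : ℕ)} => Z i.1 ω)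
          = mi p (fun ω => (WS ω, S j ω)) ZL := by
        refine mi_congr_left p _
          (fun u : (Fin M2 × ({i : Fin n // (j : ℕ) + 1 ≤ (i : ℕ)} → 𝒮)) × 𝒮 =>
            ((u.1.1 : Fin M2), fun i : {i : Fin n // (j : ℕ) ≤ (i : ℕ)} =>
              if hi : (j : ℕ) + 1 ≤ (i : ℕ) then u.1.2 ⟨i.1, hi⟩ else u.2))
          ?_ ?_
        · apply Function.LeftInverse.injective
            (g := fun w : Fin M2 × ({i : Fin n // (j : ℕ) ≤ (i : ℕ)} → 𝒮) =>
              ((w.1, fun i : {i : Fin n // (j : ℕ) + 1 ≤ (i : ℕ)} => w.2 ⟨i.1, by omega⟩),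
                w.2 ⟨j, by omega⟩))
          intro u
          refine Prod.ext (Prod.ext rfl (funext fun i => ?_)) ?_
          · show (if hi : (j : ℕ) + 1 ≤ ((i : Fin n) : ℕ) then u.1.2 ⟨i.1, hi⟩ else u.2)
              = u.1.2 i
            rw [dif_pos i.2]
          · show (if hi : (j : ℕ) + 1 ≤ ((j : Fin n) : ℕ) then u.1.2 ⟨j, hi⟩ else u.2) = u.2
            rw [dif_neg (by omega)]
        · intro ω
          refine Prod.ext rfl (funext fun i => ?_)
          show S i.1 ω = if hi : (j : ℕ) + 1 ≤ ((i : Fin n) : ℕ) then WS ω |>.2 ⟨i.1, hi⟩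
            else S j ω
          split
          · next hi => rfl
          · next hi =>
              have hij : i.1 = j := Fin.ext (by omega)
              rw [hij]
      rw [h10, chain_mi]
    have e12 : cmi p (Z j) WS ZL = cmi p WS (Z j) ZL := cmi_comm p _ _ _
    have e13 : cmi p (S j) ZL WS = cmi p ZL (S j) WS := cmi_comm p _ _ _
    have e14 : mi p ZL WS = mi p WS ZL := mi_comm p _ _
    have e15 : 0 ≤ mi p ZL (Z j) := mi_nonneg p hp _ _
    rw [e1, e3, e5, e6, e9, e12, e13, e14]
    linarith
  -- telescoping
  have htel : mi p W2 (fun ω => fun j => Z j ω)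
      ≤ ∑ j : Fin n,
          (mi p (fun ω => (W2 ω, (fun i : {i : Fin n // i < j} => Z i.1 ω),
              (fun i : {i : Fin n // j < i} => S i.1 ω))) (Z j)
           - mi p (fun ω => (W2 ω, (fun i : {i : Fin n // i < j} => Z i.1 ω),
              (fun i : {i : Fin n // j < i} => S i.1 ω))) (S j)) := by
    have h1 : mi p W2 (fun ω => fun j => Z j ω)
        = ∑ j : Fin n, (F ((j : ℕ) + 1) - F (j : ℕ)) := by
      rw [Fin.sum_univ_eq_sum_range (fun k => F (k + 1) - F k) n, Finset.sum_range_sub F n,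
        hF0, hFn, sub_zero]
    rw [h1]
    exact Finset.sum_le_sum fun j _ => hstep j
  -- final arithmetic
  have hnR : (0 : ℝ) < n := by exact_mod_cast hn
  have hkey : ent p W2
      ≤ (∑ j : Fin n,
          (mi p (fun ω => (W2 ω, (fun i : {i : Fin n // i < j} => Z i.1 ω),
              (fun i : {i : Fin n // j < i} => S i.1 ω))) (Z j)
           - mi p (fun ω => (W2 ω, (fun i : {i : Fin n // i < j} => Z i.1 ω),
              (fun i : {i : Fin n // j < i} => S i.1 ω))) (S j)))
        + (1 + Real.logb 2 M2 * (∑ ω, if g (fun j => Z j ω) ≠ W2 ω then p ω else 0)) := by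
    linarith
  have hcoef : (n : ℝ) * (Real.logb 2 M2 / n) = Real.logb 2 M2 := by
    field_simp
  rw [hcoef]
  calc (1 / (n : ℝ)) * ent p W2
      ≤ (1 / (n : ℝ)) * ((∑ j : Fin n,
          (mi p (fun ω => (W2 ω, (fun i : {i : Fin n // i < j} => Z i.1 ω),
              (fun i : {i : Fin n // j < i} => S i.1 ω))) (Z j)
           - mi p (fun ω => (W2 ω, (fun i : {i : Fin n // i < j} => Z i.1 ω),
              (fun i : {i : Fin n // j < i} => S i.1 ω))) (S j)))
        + (1 + Real.logb 2 M2 * (∑ ω, if g (fun j => Z j ω) ≠ W2 ω then p ω else 0))) := by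
        exact mul_le_mul_of_nonneg_left hkey (by positivity)
    _ = _ := by ring
end IE
end
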